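/- arXiv:1011.6432 — 2 statements merged into one kernel-verified Lean document; each statement's English description precedes it below -/
import Mathlib

section
/- The factors of the ordered partition of the data word of fractional parts of a timed braid correspond exactly to the maximal groups of positions sharing the same integer part: for a timed braid (a_1,t_1)...(a_n,t_n), positions i and i+1 lie in the same factor of the ordered partition of ({t_1},...,{t_n}) if and only if ⌊t_i⌋ = ⌊t_{i+1}⌋. -/
/-!
In a timed braid consecutive time stamps satisfy `t i < t (i+1) ≤ t i + 1`: if `t i < ⌊t n⌋`,
the closure condition puts `t i + 1` later in the word, and otherwise
`t (i+1) ≤ t n < ⌊t n⌋ + 1 ≤ t i + 1`. For two such reals the fractional part increases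
exactly when the integer part stays the same. On the other hand, in an ordered partition a new
factor starts at position `i + 1` exactly when the datum does not increase there.
-/

variable {A : Type*} {D : Type*} [LinearOrder D]

/-- An ordered partition of a data word: a factorization into nonempty consecutive
factors, strictly increasing in the data component, such that the first datum of each
next factor is ≤ the last datum of the previous factor (maximality). -/
def IsOrderedPartition (P : List (List (A × D))) (w : List (A × D)) : Prop :=
  P.flatten = w ∧
  (∀ b ∈ P, b ≠ []) ∧
  (∀ b ∈ P, (b.map Prod.snd).Chain' (· < ·)) ∧
  P.Chain' (fun b c => ∀ x ∈ (c.map Prod.snd).head?, ∀ y ∈ (b.map Prod.snd).getLast?, x ≤ y)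

/-- A data braid w.r.t. a marking of the alphabet: the minimum datum appears at the
first position, the data projection of each factor of the ordered partition is a
subsequence of that of the next factor, and the marked positions are exactly those
carrying the first datum. -/
def IsDataBraid (marked : A → Prop) (w : List (A × D)) : Prop :=
  ∃ P : List (List (A × D)), IsOrderedPartition P w ∧
    (∀ d₁ ∈ (w.map Prod.snd).head?,
      (∀ p ∈ w, d₁ ≤ p.2) ∧ (∀ p ∈ w, marked p.1 ↔ p.2 = d₁)) ∧
    P.Chain' (fun b c => (b.map Prod.snd).Sublist (c.map Prod.snd))

/-- Position `i` is the first position of some factor of the partition `P`. -/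
def startsFactor (P : List (List (A × D))) (i : ℕ) : Prop :=
  ∃ j < P.length, i = ((P.take j).map List.length).sum

/-- A timed braid w.r.t. a marking of the alphabet: the first time stamp is `0`, time
stamps are strictly increasing, the marked positions are exactly those with integer
time stamps, and whenever `t i < ⌊t n⌋` the value `t i + 1` appears later. -/
def IsTimedBraid {A : Type*} (marked : A → Prop) (u : List (A × ℝ)) : Prop :=
  (∀ p ∈ u.head?, (p : A × ℝ).2 = 0) ∧
  (u.map Prod.snd).Chain' (· < ·) ∧
  (∀ p ∈ u, marked p.1 ↔ ∃ k : ℤ, p.2 = (k : ℝ)) ∧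
  (∀ q ∈ u.getLast?, ∀ i (hi : i < u.length),
    (u.get ⟨i, hi⟩).2 < (⌊(q : A × ℝ).2⌋ : ℝ) →
    ∃ j, ∃ hj : j < u.length, i < j ∧ (u.get ⟨j, hj⟩).2 = (u.get ⟨i, hi⟩).2 + 1)

/-- The number of factors of the partition `P` ending strictly before position `i`. -/
def factorsEndedBefore {α : Type*} (P : List (List α)) (i : ℕ) : ℕ :=
  (List.range P.length).countP (fun j => decide (((P.take (j+1)).map List.length).sum ≤ i))

theorem Int.fract_lt_fract_iff_floor_eq {α : Type*} [CommRing α] [LinearOrder α]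
    [IsStrictOrderedRing α] [FloorRing α] {s t : α} (hst : s < t) (hts : t ≤ s + 1) :
    Int.fract s < Int.fract t ↔ ⌊s⌋ = ⌊t⌋ := by
  rcases (Int.floor_mono hst.le).eq_or_lt with hfloor | hfloor
  · simp only [Int.fract, hfloor, iff_true]
    linarith
  · have : (⌊s⌋ : α) + 1 ≤ ⌊t⌋ := by exact_mod_cast hfloor
    simp only [Int.fract, hfloor.ne, iff_false, not_lt]
    linarith

theorem startsFactor_cons {α β : Type*} (b : List (α × β)) (P : List (List (α × β))) (m : ℕ) :
    startsFactor (b :: P) m ↔ m = 0 ∨ (b.length ≤ m ∧ startsFactor P (m - b.length)) := by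
  constructor
  · rintro ⟨_ | j, hj, rfl⟩
    · exact .inl rfl
    · simp only [List.take_succ_cons, List.map_cons, List.sum_cons]
      exact .inr ⟨by omega, j, by simpa using hj, by omega⟩
  · rintro (rfl | ⟨hle, j, hj, hsum⟩)
    · exact ⟨0, by simp, by simp⟩
    · refine ⟨j + 1, by simpa using hj, ?_⟩
      simp only [List.take_succ_cons, List.map_cons, List.sum_cons]
      omega

namespace IsOrderedPartition

theorem tail {b : List (A × D)} {P : List (List (A × D))} {w : List (A × D)}
    (hP : IsOrderedPartition (b :: P) w) : IsOrderedPartition P P.flatten := by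
  obtain ⟨-, hne, hinc, hmax⟩ := hP
  exact ⟨rfl, fun c hc => hne c (.tail _ hc), fun c hc => hinc c (.tail _ hc), hmax.tail⟩

theorem not_startsFactor_succ_iff {P : List (List (A × D))} {w : List (A × D)}
    (hP : IsOrderedPartition P w) {i : ℕ} (hi : i + 1 < w.length) :
    ¬ startsFactor P (i + 1) ↔ w[i].2 < w[i + 1].2 := by
  induction P generalizing w i with
  | nil => obtain rfl : w = [] := hP.1.symm; simp at hi
  | cons b P ih =>
    obtain rfl : w = b ++ P.flatten := hP.1.symm.trans List.flatten_cons
    rw [startsFactor_cons]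
    rcases lt_trichotomy (i + 1) b.length with hlt | heq | hgt
    · rw [List.getElem_append_left hlt, List.getElem_append_left (by omega)]
      have hinc := List.isChain_iff_getElem.mp (hP.2.2.1 b (.head _)) i (by simpa using hlt)
      simp only [List.getElem_map] at hinc
      simp only [hinc, iff_true]
      omega
    · obtain ⟨c, P, rfl⟩ := List.exists_cons_of_ne_nil
        (show P ≠ [] by rintro rfl; simp [← heq] at hi)
      have hb : b ≠ [] := hP.2.1 b (.head _)
      have hc : c ≠ [] := hP.2.1 c (.tail _ (.head _))
      have hmax := (List.isChain_cons_cons.mp hP.2.2.2).1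
      have hle : (c.head hc).2 ≤ (b.getLast hb).2 := by
        simpa [List.head?_eq_some_head hc, List.getLast?_eq_some_getLast hb] using hmax
      have hstart : startsFactor (c :: P) (i + 1 - b.length) := by
        rw [heq, Nat.sub_self]
        exact (startsFactor_cons c P 0).mpr (.inl rfl)
      have hwi : (b ++ (c :: P).flatten)[i] = b.getLast hb := by
        rw [List.getElem_append_left (by omega), List.getLast_eq_getElem]
        simp only [← heq, Nat.add_sub_cancel]
      have hwi1 : (b ++ (c :: P).flatten)[i + 1] = c.head hc := by
        rw [List.getElem_append_right heq.ge]
        simp only [heq, Nat.sub_self, List.flatten_cons, List.head_eq_getElem]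
        exact List.getElem_append_left _
      rw [hwi, hwi1]
      exact iff_of_false (fun h => h (.inr ⟨heq.ge, hstart⟩)) hle.not_gt
    · have hle : b.length ≤ i := by omega
      have hsub : i + 1 - b.length = i - b.length + 1 := by omega
      rw [List.getElem_append_right hle, List.getElem_append_right (by omega)]
      simp only [hsub, Nat.add_eq_zero_iff, one_ne_zero, and_false, false_or, hgt.le, true_and]
      exact ih hP.tail (by simp at hi ⊢; omega)

end IsOrderedPartition

namespace IsTimedBraid

variable {marked : A → Prop} {u : List (A × ℝ)}

theorem stamp_lt_stamp_iff (h : IsTimedBraid marked u) {i j : ℕ} (hi : i < u.length)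
    (hj : j < u.length) : u[i].2 < u[j].2 ↔ i < j := by
  have := h.2.1.sortedLT.getElem_lt_getElem_iff (i := i) (j := j)
    (hi := by simpa) (hj := by simpa)
  rwa [List.getElem_map, List.getElem_map] at this

theorem stamp_le_stamp_iff (h : IsTimedBraid marked u) {i j : ℕ} (hi : i < u.length)
    (hj : j < u.length) : u[i].2 ≤ u[j].2 ↔ i ≤ j := by
  have := h.2.1.sortedLT.getElem_le_getElem_iff (i := i) (j := j)
    (hi := by simpa) (hj := by simpa)
  rwa [List.getElem_map, List.getElem_map] at this

theorem stamp_succ_le_add_one (h : IsTimedBraid marked u) {i : ℕ} (hi : i + 1 < u.length) :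
    u[i + 1].2 ≤ u[i].2 + 1 := by
  have hn : u.length - 1 < u.length := by omega
  have hlast : u[u.length - 1] ∈ u.getLast? := by simp [List.getLast?_eq_getElem?]
  by_cases hsmall : u[i].2 < ⌊u[u.length - 1].2⌋
  · obtain ⟨j, hj, hij, hjt⟩ := h.2.2.2 _ hlast i (by omega) hsmall
    simp only [List.get_eq_getElem] at hjt
    exact hjt ▸ (h.stamp_le_stamp_iff hi hj).2 hij
  · apply le_of_lt
    calc u[i + 1].2 ≤ u[u.length - 1].2 := (h.stamp_le_stamp_iff hi hn).2 (by omega)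
      _ < ⌊u[u.length - 1].2⌋ + 1 := Int.lt_floor_add_one _
      _ ≤ u[i].2 + 1 := by linarith [not_lt.mp hsmall]

end IsTimedBraid

/-- For a timed braid, consecutive positions lie in the same factor of the ordered
partition of the word of fractional parts iff their time stamps have the same
integer part. -/
theorem sameFactor_iff_sameFloor {A : Type*} (marked : A → Prop) (u : List (A × ℝ))
    (h : IsTimedBraid marked u)
    (P : List (List (A × ℝ)))
    (hP : IsOrderedPartition P (u.map (fun p => (p.1, Int.fract p.2))))
    {i : ℕ} (hi : i + 1 < u.length) :
    (¬ startsFactor P (i + 1)) ↔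
      ⌊(u.get ⟨i, Nat.lt_of_succ_lt hi⟩).2⌋ = ⌊(u.get ⟨i + 1, hi⟩).2⌋ := by
  rw [hP.not_startsFactor_succ_iff (by simpa using hi)]
  simp only [List.getElem_map, List.get_eq_getElem]
  exact Int.fract_lt_fract_iff_floor_eq ((h.stamp_lt_stamp_iff _ hi).2 i.lt_succ_self)
    (h.stamp_succ_le_add_one hi)
end

section
/- A timed word is m-bounded if and only if its associated data word of fractional parts, factored by integer parts, is m-decreasing: for a timed braid w = (a_1,t_1)...(a_n,t_n), all time stamps satisfy t_i < m if and only if the data word ({t_1},...,{t_n}) has at most m−1 positions i with {t_i} ≥ {t_{i+1}}. -/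
variable {A : Type*} {D : Type*} [LinearOrder D]

/-! Along a timed braid the integer part of the time stamp grows by at most one per step:
if `t i < ⌊t n⌋` then `t i + 1` occurs later, so `t (i + 1) ≤ t i + 1`, and otherwise
`t i` and `t (i + 1)` already lie in the last unit interval. Since the stamps increase, a step
raises the integer part exactly when the fractional part does not increase, so the number
of such steps telescopes to `⌊t n⌋ - ⌊t 1⌋ = ⌊t n⌋`, and `t n < m` iff `⌊t n⌋ ≤ m - 1`. -/

open Finset

section FloorRing

variable {α : Type*} [Ring α] [LinearOrder α] [FloorRing α]

theorem Int.fract_lt_fract_of_floor_eq [IsStrictOrderedRing α] {a b : α} (hab : a < b)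
    (hfloor : ⌊a⌋ = ⌊b⌋) :
    Int.fract a < Int.fract b := by
  rw [Int.fract, Int.fract, hfloor]
  exact sub_lt_sub_right hab _

theorem Int.floor_eq_floor_add_ite [IsStrictOrderedRing α] {a b : α} (hab : a < b)
    (hba : b ≤ a + 1) :
    ⌊b⌋ = ⌊a⌋ + if Int.fract b ≤ Int.fract a then 1 else 0 := by
  have hlo : ⌊a⌋ ≤ ⌊b⌋ := Int.floor_mono hab.le
  have hhi : ⌊b⌋ ≤ ⌊a⌋ + 1 := by simpa using Int.floor_mono hba
  rcases (by omega : ⌊a⌋ = ⌊b⌋ ∨ ⌊b⌋ = ⌊a⌋ + 1) with hfloor | hfloor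
  · simp [hfloor, Int.fract_lt_fract_of_floor_eq hab hfloor]
  · have : Int.fract b ≤ Int.fract a := by
      rw [Int.fract, Int.fract, hfloor, Int.cast_add, Int.cast_one]
      calc b - (⌊a⌋ + 1) ≤ a + 1 - (⌊a⌋ + 1) := sub_le_sub_right hba _
        _ = a - ⌊a⌋ := by abel
    simp [hfloor, this]

theorem card_filter_fract_le_eq_floor_sub {t : ℕ → α} {n : ℕ}
    (hstep : ∀ i < n,
      ⌊t (i + 1)⌋ = ⌊t i⌋ + if Int.fract (t (i + 1)) ≤ Int.fract (t i) then 1 else 0) :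
    (#{i ∈ range n | Int.fract (t (i + 1)) ≤ Int.fract (t i)} : ℤ) = ⌊t n⌋ - ⌊t 0⌋ := by
  rw [natCast_card_filter, ← sum_range_sub fun i => ⌊t i⌋]
  refine sum_congr rfl fun i hi => ?_
  rw [hstep i (mem_range.mp hi)]
  ring

theorem List.ncard_fract_descents_eq_floor_sub (l : List α) (hl : l ≠ [])
    (hstep : ∀ i (hi : i + 1 < l.length),
      ⌊l[i + 1]⌋ = ⌊l[i]⌋ + if Int.fract l[i + 1] ≤ Int.fract l[i] then 1 else 0) :
    ({i | ∃ hi : i + 1 < l.length, Int.fract l[i + 1] ≤ Int.fract l[i]}.ncard : ℤ) =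
      ⌊l.getLast hl⌋ - ⌊l.head hl⌋ := by
  have hlen : 0 < l.length := List.length_pos_iff.mpr hl
  set t : ℕ → α := fun i => l.getD i 0
  have ht : ∀ i (hi : i < l.length), t i = l[i] := fun i hi => List.getD_eq_getElem _ _ hi
  have hset : {i | ∃ hi : i + 1 < l.length, Int.fract l[i + 1] ≤ Int.fract l[i]} =
      (({i ∈ Finset.range (l.length - 1) | Int.fract (t (i + 1)) ≤ Int.fract (t i)} : Finset ℕ) :
        Set ℕ) := by
    ext i
    simp only [Set.mem_ofPred_eq, coe_filter, Finset.mem_range]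
    constructor
    · rintro ⟨hi, hfract⟩
      exact ⟨by omega, by rwa [ht i (by omega), ht (i + 1) hi]⟩
    · rintro ⟨hi, hfract⟩
      exact ⟨by omega, by rwa [ht i (by omega), ht (i + 1) (by omega)] at hfract⟩
  rw [hset, Set.ncard_coe_finset, card_filter_fract_le_eq_floor_sub fun i hi => ?_,
    List.getLast_eq_getElem, List.head_eq_getElem, ht _ (by omega), ht 0 hlen]
  rw [ht i (by omega), ht (i + 1) (by omega)]
  exact hstep i (by omega)

end FloorRing

namespace IsTimedBraid

variable {marked : A → Prop} {u : List (A × ℝ)}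

theorem snd_lt_snd (h : IsTimedBraid marked u) {i j : ℕ} (hij : i < j) (hj : j < u.length) :
    u[i].2 < u[j].2 := by
  have := List.pairwise_iff_getElem.mp (List.isChain_iff_pairwise.mp h.2.1) i j
    (by simp; omega) (by simpa using hj) hij
  simpa using this

theorem snd_le_snd (h : IsTimedBraid marked u) {i j : ℕ} (hij : i ≤ j) (hj : j < u.length) :
    u[i].2 ≤ u[j].2 := by
  rcases hij.eq_or_lt with rfl | hij
  · exact le_rfl
  · exact (h.snd_lt_snd hij hj).le

theorem floor_succ_eq (h : IsTimedBraid marked u) {i : ℕ} (hi : i + 1 < u.length) :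
    ⌊u[i + 1].2⌋ = ⌊u[i].2⌋ + if Int.fract u[i + 1].2 ≤ Int.fract u[i].2 then 1 else 0 := by
  have hne : u ≠ [] := List.ne_nil_of_length_pos (by omega)
  have hlt := h.snd_lt_snd (Nat.lt_succ_self i) hi
  by_cases hreach : u[i].2 < ⌊(u.getLast hne).2⌋
  · obtain ⟨j, hj, hij, hjeq⟩ :=
      h.2.2.2 _ (List.getLast?_eq_some_getLast hne) i (by omega) hreach
    refine Int.floor_eq_floor_add_ite hlt ?_
    calc u[i + 1].2 ≤ u[j].2 := h.snd_le_snd hij hj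
      _ = u[i].2 + 1 := by simpa using hjeq
  · have hlast : ⌊u[i + 1].2⌋ ≤ ⌊(u.getLast hne).2⌋ := by
      rw [List.getLast_eq_getElem]
      exact Int.floor_mono (h.snd_le_snd (by omega) _)
    have hfloor : ⌊u[i].2⌋ = ⌊u[i + 1].2⌋ :=
      le_antisymm (Int.floor_mono hlt.le) (hlast.trans (Int.le_floor.mpr (not_lt.mp hreach)))
    simp [hfloor, Int.fract_lt_fract_of_floor_eq hlt hfloor]

theorem snd_le_getLast_snd (h : IsTimedBraid marked u) (hne : u ≠ []) {p : A × ℝ}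
    (hp : p ∈ u) : p.2 ≤ (u.getLast hne).2 := by
  obtain ⟨k, hk, rfl⟩ := List.getElem_of_mem hp
  rw [List.getLast_eq_getElem]
  exact h.snd_le_snd (by omega) _

end IsTimedBraid

/-- A timed braid is `m`-bounded (all time stamps `< m`) iff its data word of
fractional parts is `m`-decreasing (at most `m - 1` positions `i` with
`{t i} ≥ {t (i+1)}`). -/
theorem mBounded_iff_mDecreasing {A : Type*} (marked : A → Prop) (u : List (A × ℝ))
    (h : IsTimedBraid marked u) (m : ℕ) (hm : 1 ≤ m) :
    (∀ p ∈ u, p.2 < (m : ℝ)) ↔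
      {i : ℕ | ∃ hi : i + 1 < u.length,
        Int.fract (u.get ⟨i + 1, hi⟩).2
          ≤ Int.fract (u.get ⟨i, Nat.lt_of_succ_lt hi⟩).2}.ncard ≤ m - 1 := by
  rcases eq_or_ne u [] with rfl | hne
  · simp
  have hcount := List.ncard_fract_descents_eq_floor_sub (u.map Prod.snd) (by simpa using hne)
    fun i hi => by simpa using h.floor_succ_eq (by simpa using hi)
  simp only [List.length_map, List.getElem_map, List.getLast_map, List.head_map,
    h.1 _ (List.head?_eq_some_head hne), Int.floor_zero, sub_zero] at hcount
  have hbounded : (∀ p ∈ u, p.2 < (m : ℝ)) ↔ (u.getLast hne).2 < m :=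
    ⟨fun hlt => hlt _ (List.getLast_mem hne),
      fun hlt _ hp => (h.snd_le_getLast_snd hne hp).trans_lt hlt⟩
  rw [hbounded, ← Int.cast_natCast, ← Int.floor_lt]
  simp only [List.get_eq_getElem]
  omega
end
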